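/- arXiv:2603.02947 — 2 statements merged into one kernel-verified Lean document; each statement's English description precedes it below -/
import Mathlib

section
/- Let D be a simple digraph in which all directed cycle lengths belong to a set K of size k. Then the list dichromatic number of D is at most k+1. -/
/-- A directed cycle of length `n` in the digraph with arc relation `A`:
an injective map `f : ZMod n → V` with an arc from each vertex to the next. -/
def IsDicycle {V : Type*} (A : V → V → Prop) (n : ℕ) (f : ZMod n → V) : Prop :=
  0 < n ∧ Function.Injective f ∧ ∀ i, A (f i) (f (i + 1))

/-- A set of vertices is acyclic if it contains no directed cycle. -/
def AcyclicSet {V : Type*} (A : V → V → Prop) (S : Set V) : Prop :=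
  ∀ (n : ℕ) (f : ZMod n → V), (∀ i, f i ∈ S) → ¬ IsDicycle A n f

/-- The dichromatic number: least `k` such that the vertices can be colored with `k`
colors with every color class acyclic. -/
noncomputable def dichromatic {V : Type*} (A : V → V → Prop) : ℕ :=
  sInf {k | ∃ c : V → Fin k, ∀ i, AcyclicSet A (c ⁻¹' {i})}

/-- The maximum size of an acyclic set of vertices. -/
noncomputable def maxAcyclic {V : Type*} [Fintype V] (A : V → V → Prop) : ℕ :=
  sSup {k | ∃ S : Finset V, AcyclicSet A ↑S ∧ S.card = k}

/-!
Let `v` be the last vertex of a longest directed path `P` inside a vertex set `S`. Every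
out-neighbour of `v` in `S` lies on `P`, and the one `i` steps before `v` closes a directed cycle
of length `i + 1`. Distinct out-neighbours give distinct lengths, all in `K`, so `v` has at most
`|K|` out-neighbours in `S`. Colouring greedily in the reverse of this degeneracy order, each new
vertex takes a colour of its list missed by its out-neighbours; a monochromatic cycle through it
would leave it along an arc to a vertex of its own colour.
-/

theorem List.exists_isDicycle_of_isChain {V : Type*} {A : V → V → Prop} {l : List V}
    (hne : l ≠ []) (hnd : l.Nodup) (hch : l.IsChain A)
    (hclose : A (l.getLast hne) (l.head hne)) :
    ∃ f : ZMod l.length → V, IsDicycle A l.length f := by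
  have hpos : 0 < l.length := List.length_pos_iff.mpr hne
  have : NeZero l.length := ⟨hpos.ne'⟩
  have hsucc (i : ZMod l.length) : (i + 1).val = (i.val + 1) % l.length := by
    rw [ZMod.val_add, ZMod.val_one_eq_one_mod, Nat.add_mod_mod]
  refine ⟨fun i => l[i.val]'(ZMod.val_lt i), hpos, ?_, fun i => ?_⟩
  · intro i j hij
    exact ZMod.val_injective _ (by simpa [hnd.getElem_inj_iff] using hij)
  · have hi := ZMod.val_lt i
    by_cases hlast : i.val + 1 < l.length
    · simp only [hsucc, Nat.mod_eq_of_lt hlast]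
      exact List.isChain_iff_getElem.mp hch _ hlast
    · have hi' : i.val = l.length - 1 := by omega
      simp only [hsucc, hi', Nat.sub_add_cancel hpos, Nat.mod_self]
      rwa [List.getLast_eq_getElem, List.head_eq_getElem_zero] at hclose

open Finset

section

variable {V : Type*} {A : V → V → Prop}

/-- `l = [v₀, v₁, …, vₘ]` lists a directed path `vₘ → ⋯ → v₁ → v₀` inside `S` backwards,
so that its last vertex `v₀` is `l.head`. -/
def IsRevPathIn (A : V → V → Prop) (S : Finset V) (l : List V) : Prop :=
  l.Nodup ∧ (∀ x ∈ l, x ∈ S) ∧ l.IsChain (fun x y => A y x)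

theorem IsRevPathIn.cons {S : Finset V} {l : List V} (hl : IsRevPathIn A S l) (hne : l ≠ [])
    {u : V} (huS : u ∈ S) (hul : u ∉ l) (hA : A (l.head hne) u) :
    IsRevPathIn A S (u :: l) := by
  obtain ⟨hnd, hS, hch⟩ := hl
  refine ⟨List.nodup_cons.mpr ⟨hul, hnd⟩, ?_, hch.cons ?_⟩
  · simpa [huS] using hS
  · simpa [List.head?_eq_some_head hne] using hA

theorem exists_revPathIn_outNeighbors_subset [Fintype V] {S : Finset V} (hS : S.Nonempty) :
    ∃ l : List V, ∃ hne : l ≠ [], IsRevPathIn A S l ∧ ∀ u ∈ S, A (l.head hne) u → u ∈ l := by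
  obtain ⟨x, hx⟩ := hS
  have hfin : Set.Finite {l | IsRevPathIn A S l ∧ l ≠ []} :=
    (List.finite_length_le V (Fintype.card V)).subset fun l hl => hl.1.1.length_le_card
  obtain ⟨l, ⟨hl, hne⟩, hmax⟩ := Set.exists_max_image _ List.length hfin
    ⟨[x], ⟨List.nodup_singleton x, by simpa, List.isChain_singleton x⟩, List.cons_ne_nil x []⟩
  refine ⟨l, hne, hl, fun u huS hA => ?_⟩
  by_contra hul
  have := hmax (u :: l) ⟨hl.cons hne huS hul hA, List.cons_ne_nil u l⟩
  simp at this

theorem IsRevPathIn.succ_idxOf_mem_of_cycleLengths {K : Finset ℕ}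
    (hcyc : ∀ (n : ℕ) (f : ZMod n → V), IsDicycle A n f → n ∈ K) [DecidableEq V]
    {S : Finset V} {l : List V} (hl : IsRevPathIn A S l) (hne : l ≠ []) {u : V} (hul : u ∈ l)
    (hA : A (l.head hne) u) :
    l.idxOf u + 1 ∈ K := by
  obtain ⟨hnd, -, hch⟩ := hl
  have hidx : l.idxOf u < l.length := List.idxOf_lt_length_iff.mpr hul
  set c := (l.take (l.idxOf u + 1)).reverse with hc
  have hcne : c ≠ [] := by simp [hc, hne]
  have hlen : c.length = l.idxOf u + 1 := by simp [hc]; omega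
  obtain ⟨f, hf⟩ := List.exists_isDicycle_of_isChain hcne
    (List.nodup_reverse.mpr (hnd.sublist (List.take_sublist _ _)))
    (List.isChain_reverse.mpr (hch.take _))
    (by simpa [hc, List.getLast_reverse, List.head_reverse, List.head_take, List.getLast_take,
      List.getElem?_eq_getElem hidx, List.getElem_idxOf hidx] using hA)
  exact hlen ▸ hcyc _ f hf

theorem exists_card_outNeighbors_le_of_cycleLengths [Fintype V] [DecidableEq V] [DecidableRel A]
    {K : Finset ℕ} (hcyc : ∀ (n : ℕ) (f : ZMod n → V), IsDicycle A n f → n ∈ K)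
    {S : Finset V} (hS : S.Nonempty) :
    ∃ v ∈ S, #{u ∈ S | A v u} ≤ #K := by
  obtain ⟨l, hne, hl, hout⟩ := exists_revPathIn_outNeighbors_subset (A := A) hS
  refine ⟨l.head hne, hl.2.1 _ (List.head_mem hne), ?_⟩
  refine card_le_card_of_injOn (fun u => l.idxOf u + 1) (fun u hu => ?_) ?_
  · obtain ⟨huS, hA⟩ := mem_filter.mp hu
    exact hl.succ_idxOf_mem_of_cycleLengths hcyc hne (hout u huS hA) hA
  · intro u hu w _ huw
    have hu' := mem_filter.mp hu
    exact (List.idxOf_inj (hout u hu'.1 hu'.2)).mp (Nat.succ_injective huw)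

theorem AcyclicSet.mono {S T : Set V} (hT : AcyclicSet A T) (hST : S ⊆ T) : AcyclicSet A S :=
  fun n f hf => hT n f fun i => hST (hf i)

theorem AcyclicSet.insert {T : Set V} (hT : AcyclicSet A T) {v : V} (hv : ¬ A v v)
    (hout : ∀ u ∈ T, ¬ A v u) : AcyclicSet A (insert v T) := by
  intro n f hf ⟨hn, hinj, harc⟩
  by_cases hvf : ∃ i, f i = v
  · obtain ⟨i, rfl⟩ := hvf
    rcases hf (i + 1) with hnext | hnext
    · exact hv (hnext ▸ harc i)
    · exact hout _ hnext (harc i)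
  · push Not at hvf
    exact hT n f (fun i => (hf i).resolve_left (hvf i)) ⟨hn, hinj, harc⟩

theorem exists_acyclic_listColoring_of_degenerate [DecidableEq V] [DecidableRel A]
    (hloop : ∀ v, ¬ A v v) {d : ℕ}
    (hdeg : ∀ S : Finset V, S.Nonempty → ∃ v ∈ S, #{u ∈ S | A v u} ≤ d)
    {C : Type*} [DecidableEq C] (L : V → Finset C) (hL : ∀ v, d + 1 ≤ #(L v)) (S : Finset V) :
    ∃ c : V → C, (∀ v, c v ∈ L v) ∧ ∀ col, AcyclicSet A (↑S ∩ c ⁻¹' {col}) := by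
  induction S using Finset.strongInduction with
  | _ S ih =>
  rcases S.eq_empty_or_nonempty with rfl | hS
  · choose c hc using fun v => card_pos.mp (by have := hL v; omega : 0 < #(L v))
    exact ⟨c, hc, fun col n f hf _ => by simpa using (hf 0).1⟩
  obtain ⟨v, hvS, hdeg_v⟩ := hdeg S hS
  obtain ⟨c, hcL, hcacyc⟩ := ih (S.erase v) (erase_ssubset hvS)
  obtain ⟨col, hcolL, hcol⟩ : ∃ col ∈ L v, col ∉ {u ∈ S | A v u}.image c := by
    by_contra! h
    have := (card_le_card h).trans (card_image_le.trans hdeg_v)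
    have := hL v
    omega
  refine ⟨Function.update c v col, fun u => ?_, fun col' => ?_⟩
  · rcases eq_or_ne u v with rfl | huv
    · simpa using hcolL
    · simpa [huv] using hcL u
  by_cases hcol' : col' = col
  · subst hcol'
    refine ((hcacyc col').insert (hloop v) fun u ⟨huS, hu⟩ hA => hcol ?_).mono ?_
    · exact mem_image.mpr ⟨u, mem_filter.mpr ⟨mem_of_mem_erase huS, hA⟩, hu⟩
    · rintro u ⟨huS, hu⟩
      rcases eq_or_ne u v with rfl | huv
      · exact Set.mem_insert u _
      · exact Set.mem_insert_of_mem v ⟨mem_erase.mpr ⟨huv, huS⟩, by simpa [huv] using hu⟩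
  · refine (hcacyc col').mono ?_
    rintro u ⟨huS, hu⟩
    rcases eq_or_ne u v with rfl | huv
    · exact absurd (by simpa using hu) (Ne.symm hcol')
    · exact ⟨mem_erase.mpr ⟨huv, huS⟩, by simpa [huv] using hu⟩

end

/-- If all directed cycle lengths of a simple digraph `D` belong to a set `K`
of size `k`, then the list dichromatic number of `D` is at most `k+1`: for any lists of
size at least `k+1` there is a coloring from the lists with no monochromatic directed cycle. -/
theorem stmt2 {V : Type*} [Fintype V] (A : V → V → Prop)
    (hirr : Irreflexive A) (K : Finset ℕ)
    (hcyc : ∀ (n : ℕ) (f : ZMod n → V), IsDicycle A n f → n ∈ K)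
    (L : V → Finset ℕ) (hL : ∀ v, K.card + 1 ≤ (L v).card) :
    ∃ c : V → ℕ, (∀ v, c v ∈ L v) ∧ ∀ col : ℕ, AcyclicSet A (c ⁻¹' {col}) := by
  classical
  obtain ⟨c, hcL, hcacyc⟩ := exists_acyclic_listColoring_of_degenerate hirr
    (fun _ => exists_card_outNeighbors_le_of_cycleLengths hcyc) L hL univ
  exact ⟨c, hcL, fun col => by simpa using hcacyc col⟩
end

section
/- Let T be a tournament on t ≥ 3 vertices and suppose ε > 0 is such that every n-vertex oriented graph with no subdigraph isomorphic to T contains an acyclic set of size at least n^ε (for all n). Then ε ≤ 2/t. -/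
open Finset Function

section Acyclic

variable {V W : Type*} {A : V → V → Prop}

lemma AcyclicSet.mono_s10 {S U : Set V} (hU : AcyclicSet A U) (hSU : S ⊆ U) : AcyclicSet A S :=
  fun n f hf => hU n f fun i => hSU (hf i)

lemma AcyclicSet.image {f : W → V} {S : Set W}
    (hS : AcyclicSet (fun a b => A (f a) (f b)) S) : AcyclicSet A (f '' S) := by
  rintro n c hc ⟨hn, hinj, harc⟩
  choose d hdS hd using hc
  refine hS n d hdS ⟨hn, fun i j hij => hinj ?_, fun i => ?_⟩
  · rw [← hd i, ← hd j, hij]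
  · simpa only [hd] using harc i

lemma isDicycle_iterate_neg {g : V → V} {y : V} (hy : 0 < minimalPeriod g y)
    (hA : ∀ x, A (g x) x) :
    IsDicycle A (minimalPeriod g y) fun i => g^[(-i).val] y := by
  set L := minimalPeriod g y
  have : NeZero L := ⟨hy.ne'⟩
  refine ⟨hy, fun i j hij => neg_injective (ZMod.val_injective L ?_), fun i => ?_⟩
  · exact iterate_injOn_Iio_minimalPeriod (ZMod.val_lt _) (ZMod.val_lt _) hij
  · have hval : ((-(i + 1)).val + 1) % L = (-i).val := by
      rw [← ZMod.val_natCast, Nat.cast_add, ZMod.natCast_zmod_val, Nat.cast_one, neg_add,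
        neg_add_cancel_right]
    convert hA (g^[(-(i + 1)).val] y) using 1
    rw [← iterate_succ_apply' g, ← iterate_mod_minimalPeriod_eq, hval]

/-- Otherwise following in-neighbours inside `S` reaches a periodic orbit, which, run backwards, is a
directed cycle. -/
lemma AcyclicSet.exists_source {S : Finset V} (hS : AcyclicSet A S) (hne : S.Nonempty) :
    ∃ x ∈ S, ∀ y ∈ S, ¬ A y x := by
  by_contra! hsrc
  choose g hgS hg using hsrc
  let G : S → S := fun x => ⟨g x x.2, hgS x x.2⟩
  obtain ⟨x₀, hx₀⟩ := hne
  obtain ⟨i, j, hij, heq⟩ := Finite.exists_ne_map_eq_of_infinite fun n : ℕ => G^[n] ⟨x₀, hx₀⟩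
  wlog hlt : i < j generalizing i j
  · exact this j i hij.symm heq.symm (lt_of_le_of_ne (not_lt.mp hlt) hij.symm)
  set y := G^[i] ⟨x₀, hx₀⟩
  have hper : IsPeriodicPt G (j - i) y := by
    rw [IsPeriodicPt, IsFixedPt, ← iterate_add_apply, Nat.sub_add_cancel hlt.le, heq]
  have hy := hper.minimalPeriod_pos (Nat.sub_pos_of_lt hlt)
  obtain ⟨hL, hinj, harc⟩ := isDicycle_iterate_neg (A := fun a b : S => A a b) hy fun x => hg x x.2
  exact hS _ (fun i => (G^[(-i).val] y : V)) (fun _ => Subtype.prop _)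
    ⟨hL, Subtype.val_injective.comp hinj, harc⟩

lemma AcyclicSet.exists_forward_ordering :
    ∀ (s : ℕ) (S : Finset V), AcyclicSet A S → s ≤ #S →
      ∃ v : Fin s → V, Injective v ∧ (∀ i, v i ∈ S) ∧ ∀ i j, i < j → ¬ A (v j) (v i)
  | 0, _, _, _ => ⟨Fin.elim0, fun i => i.elim0, fun i => i.elim0, fun i => i.elim0⟩
  | s + 1, S, hS, hs => by
    classical
    obtain ⟨x, hxS, hx⟩ := hS.exists_source (card_pos.mp (by omega))
    obtain ⟨w, hw, hwS, hwfwd⟩ := exists_forward_ordering s (S.erase x)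
      (hS.mono_s10 (coe_subset.mpr (erase_subset x S))) (by rw [card_erase_of_mem hxS]; omega)
    refine ⟨Fin.cons x w, Fin.cons_injective_iff.mpr ⟨fun ⟨i, hi⟩ => ?_, hw⟩, ?_, ?_⟩
    · exact (mem_erase.mp (hwS i)).1 hi
    · exact Fin.cases hxS fun i => mem_of_mem_erase (hwS i)
    · intro i j hij
      induction j using Fin.cases with
      | zero => exact absurd hij (Fin.not_lt_zero i)
      | succ j =>
        induction i using Fin.cases with
        | zero => exact hx _ (mem_of_mem_erase (hwS j))
        | succ i => exact hwfwd i j (Fin.succ_lt_succ_iff.mp hij)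

lemma exists_acyclicSet_card_eq_maxAcyclic [Fintype V] (A : V → V → Prop) :
    ∃ S : Finset V, AcyclicSet A S ∧ #S = maxAcyclic A := by
  have hne : ∃ k, ∃ S : Finset V, AcyclicSet A S ∧ #S = k :=
    ⟨0, ∅, fun n f hf => by simpa using hf 0, card_empty⟩
  exact Nat.sSup_mem hne ⟨Fintype.card V, by rintro _ ⟨S, -, rfl⟩; exact card_le_univ S⟩

lemma maxAcyclic_comp_lt [Fintype V] [Fintype W] {s : ℕ}
    (hA : ∀ S : Finset V, AcyclicSet A S → #S < s) (φ : W ↪ V) :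
    maxAcyclic (fun a b => A (φ a) (φ b)) < s := by
  classical
  obtain ⟨S, hS, hcard⟩ := exists_acyclicSet_card_eq_maxAcyclic fun a b => A (φ a) (φ b)
  rw [← hcard, ← card_map φ]
  exact hA _ (by simpa using hS.image)

end Acyclic

section Counting

variable {Ω : Type*} [Fintype Ω]

lemma sum_card_filter_mul_le {α : Type*} [Fintype α] (P : α → Ω → Prop)
    [∀ a ω, Decidable (P a ω)] {D E : ℕ} (h : ∀ a, #{ω | P a ω} * D ≤ E) :
    (∑ ω, #{a | P a ω}) * D ≤ Fintype.card α * E := by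
  have hswap : ∑ ω, #{a | P a ω} = ∑ a, #{ω | P a ω} :=
    sum_card_bipartiteAbove_eq_sum_card_bipartiteBelow (r := fun ω a => P a ω)
  rw [hswap, sum_mul, ← smul_eq_mul, ← card_univ]
  exact sum_le_card_nsmul _ _ _ fun a _ => h a

lemma exists_eq_zero_and_lt (X Y : Ω → ℕ) {c : ℕ} (hY : 2 * ∑ ω, Y ω ≤ Fintype.card Ω)
    (hX : 2 * ∑ ω, X ω < c * Fintype.card Ω) : ∃ ω, Y ω = 0 ∧ X ω < c := by
  by_contra! H
  have hpt : ∀ ω, c ≤ X ω + c * Y ω := fun ω => by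
    rcases Nat.eq_zero_or_pos (Y ω) with hy | hy
    · exact (H ω hy).trans le_self_add
    · exact le_add_left (Nat.le_mul_of_pos_right c hy)
  have hsum : c * Fintype.card Ω ≤ ∑ ω, X ω + c * ∑ ω, Y ω := by
    simpa [sum_add_distrib, mul_sum, mul_comm] using sum_le_sum fun ω (_ : ω ∈ univ) => hpt ω
  nlinarith

lemma card_filter_mul_pow_le {ι C β : Type*} [Fintype ι] [Fintype C] [Fintype β] [DecidableEq C]
    {h : ι → C} (hh : Injective h) (W : ι → Finset β) {w : ℕ} (hW : ∀ i, #(W i) ≤ w)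
    (P : (C → β) → Prop) [DecidablePred P] (hP : ∀ ω, P ω → ∀ i, ω (h i) ∈ W i) :
    #{ω | P ω} * Fintype.card β ^ Fintype.card ι
      ≤ w ^ Fintype.card ι * Fintype.card β ^ Fintype.card C := by
  classical
  let split : (C → β) → (ι → β) × ({c // c ∉ Set.range h} → β) := fun ω => (ω ∘ h, fun c => ω c)
  have hsplit : Injective split := fun ω ω' he => funext fun c => by
    by_cases hc : c ∈ Set.range h
    · obtain ⟨i, rfl⟩ := hc
      exact congr_fun (congr_arg Prod.fst he) i
    · exact congr_fun (congr_arg Prod.snd he) ⟨c, hc⟩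
  have hmaps : ∀ ω ∈ ({ω | P ω} : Finset _), split ω ∈ Fintype.piFinset W ×ˢ univ := fun ω hω =>
    mem_product.mpr ⟨Fintype.mem_piFinset.mpr (hP ω (mem_filter.mp hω).2), mem_univ _⟩
  have hι : Fintype.card ι ≤ Fintype.card C := Fintype.card_le_of_injective h hh
  calc #{ω | P ω} * Fintype.card β ^ Fintype.card ι
      ≤ (∏ i, #(W i)) * Fintype.card β ^ (Fintype.card C - Fintype.card ι)
          * Fintype.card β ^ Fintype.card ι := by
        gcongr
        refine (card_le_card_of_injOn split hmaps hsplit.injOn).trans_eq ?_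
        rw [card_product, Fintype.card_piFinset, card_univ, Fintype.card_fun,
          Fintype.card_subtype_compl, Set.card_range_of_injective hh]
    _ ≤ w ^ Fintype.card ι * Fintype.card β ^ (Fintype.card C - Fintype.card ι)
          * Fintype.card β ^ Fintype.card ι := by
        gcongr
        simpa using prod_le_pow_card univ (fun i => #(W i)) w fun i _ => hW i
    _ = _ := by rw [mul_assoc, pow_sub_mul_pow _ hι]

lemma card_filter_mul_pow_choose_le {V β : Type*} [Fintype V] [DecidableEq V] [Fintype β] {k : ℕ}
    {g : Fin k → V} (hg : Injective g) (W : Fin k → Fin k → Finset β) {w : ℕ}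
    (hW : ∀ i j, #(W i j) ≤ w) (P : (Sym2 V → β) → Prop) [DecidablePred P]
    (hP : ∀ ω, P ω → ∀ i j, i < j → ω s(g i, g j) ∈ W i j) :
    #{ω | P ω} * Fintype.card β ^ k.choose 2
      ≤ w ^ k.choose 2 * Fintype.card β ^ Fintype.card (Sym2 V) := by
  have hpairs : Fintype.card {p : Fin k × Fin k // p.1 < p.2} = k.choose 2 := by
    rw [Fintype.card_subtype, Fintype.card_product_filter_lt, Fintype.card_fin]
  have hinj : Injective fun p : {p : Fin k × Fin k // p.1 < p.2} => s(g p.1.1, g p.1.2) := by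
    rintro ⟨⟨a, b⟩, hab⟩ ⟨⟨c, d⟩, hcd⟩ he
    rcases Sym2.eq_iff.mp he with ⟨h1, h2⟩ | ⟨h1, h2⟩
    · exact Subtype.ext (Prod.ext (hg h1) (hg h2))
    · exact absurd ((hg h1 ▸ hg h2 ▸ hab).trans hcd) (lt_irrefl _)
  simpa only [hpairs] using card_filter_mul_pow_le hinj (fun p => W p.1.1 p.1.2)
    (fun p => hW _ _) P fun ω hω p => hP ω hω _ _ p.2

end Counting

def IsCopy {V : Type*} {t : ℕ} (T : Fin t → Fin t → Prop) (A : V → V → Prop) (g : Fin t → V) :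
    Prop :=
  Injective g ∧ ∀ i j, T i j → A (g i) (g j)

/-- Deleting one vertex of every copy of `T` leaves a `T`-free induced subdigraph. -/
lemma exists_embedding_not_isCopy {V : Type*} [Fintype V] [DecidableEq V] {t : ℕ}
    (T : Fin t → Fin t → Prop) (i₀ : Fin t) (A : V → V → Prop) [DecidablePred (IsCopy T A)] :
    ∃ (n : ℕ) (φ : Fin n ↪ V), Fintype.card V ≤ n + #{g | IsCopy T A g} ∧
      ¬ ∃ g, IsCopy T (fun a b => A (φ a) (φ b)) g := by
  set D := ({g | IsCopy T A g} : Finset _).image (· i₀)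
  set R := univ \ D
  let φ : Fin #R ↪ V := R.equivFin.symm.toEmbedding.trans (.subtype _)
  refine ⟨#R, φ, ?_, ?_⟩
  · rw [card_sdiff_of_subset (subset_univ D), card_univ]
    have : #D ≤ #{g | IsCopy T A g} := card_image_le
    have := card_le_univ D
    omega
  · rintro ⟨g, hg, hgT⟩
    have hD : φ (g i₀) ∈ D :=
      mem_image.mpr ⟨φ ∘ g, mem_filter.mpr ⟨mem_univ _, φ.injective.comp hg, hgT⟩, rfl⟩
    exact (mem_sdiff.mp (R.equivFin.symm (g i₀)).2).2 hD

section RandomOrientedGraph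

open scoped Classical

variable {V : Type*} [LinearOrder V] {q : ℕ}

/-- The oriented graph encoded by `ω`: for `u < v` there is an arc `u → v` when `ω s(u, v) = 0`
and an arc `v → u` when `ω s(u, v) = 1`. For uniformly random `ω` each orientation of each pair
is present with probability `1 / (q + 2)`. -/
def randArc (ω : Sym2 V → Fin (q + 2)) (u v : V) : Prop :=
  u ≠ v ∧ ω s(u, v) = if u < v then 0 else 1

lemma randArc_asymm (ω : Sym2 V → Fin (q + 2)) (u v : V) : randArc ω u v → ¬ randArc ω v u := by
  rintro ⟨huv, hω⟩ ⟨-, hω'⟩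
  rw [Sym2.eq_swap, hω] at hω'
  rcases huv.lt_or_gt with h | h
  · simp [h, h.not_gt] at hω'
  · simp [h, h.not_gt] at hω'

variable [Fintype V]

lemma card_isCopy_randArc_mul_le {t : ℕ} {T : Fin t → Fin t → Prop}
    (hT : ∀ i j, i ≠ j → T i j ∨ T j i) (g : Fin t → V) :
    #{ω : Sym2 V → Fin (q + 2) | IsCopy T (randArc ω) g} * (q + 2) ^ t.choose 2
      ≤ (q + 2) ^ Fintype.card (Sym2 V) := by
  by_cases hg : Injective g
  · let W i j : Finset (Fin (q + 2)) :=
      if T i j then {if g i < g j then 0 else 1} else {if g j < g i then 0 else 1}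
    have h := card_filter_mul_pow_choose_le hg W (w := 1) (fun i j => by
      unfold W; split_ifs <;> simp) (fun ω => IsCopy T (randArc ω) g) fun ω hω i j hij => by
      unfold W
      by_cases hTij : T i j
      · simp [hTij, (hω.2 i j hTij).2]
      · have := (hω.2 j i ((hT i j hij.ne).resolve_left hTij)).2
        rw [Sym2.eq_swap] at this
        simp [hTij, this]
    simpa using h
  · simp [show ∀ ω : Sym2 V → Fin (q + 2), ¬ IsCopy T (randArc ω) g from fun ω h => hg h.1]

lemma card_forward_randArc_mul_le {s : ℕ} (v : Fin s → V) :
    #{ω : Sym2 V → Fin (q + 2) | Injective v ∧ ∀ i j, i < j → ¬ randArc ω (v j) (v i)}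
        * (q + 2) ^ s.choose 2
      ≤ (q + 1) ^ s.choose 2 * (q + 2) ^ Fintype.card (Sym2 V) := by
  by_cases hv : Injective v
  · have h := card_filter_mul_pow_choose_le hv
      (fun i j => univ.erase (if v j < v i then 0 else 1)) (w := q + 1) (fun i j => by simp)
      (fun ω : Sym2 V → Fin (q + 2) => Injective v ∧ ∀ i j, i < j → ¬ randArc ω (v j) (v i))
      fun ω hω i j hij => by
        have := hω.2 i j hij
        rw [randArc, Sym2.eq_swap] at this
        simpa using fun h => this ⟨hv.ne hij.ne', h⟩
    simpa using h
  · simp [hv]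

/-- `hcopy` says that the expected number of copies of `T` is less than `|V| / 4`, and `hacyc` that
the expected number of injective `s`-tuples without backward arcs is at most `1 / 2`. -/
theorem exists_randArc_acyclic_lt_and_copies_lt {t : ℕ} (T : Fin t → Fin t → Prop)
    (hT : ∀ i j, i ≠ j → T i j ∨ T j i) (s : ℕ)
    (hcopy : 4 * Fintype.card V ^ t < Fintype.card V * (q + 2) ^ t.choose 2)
    (hacyc : 2 * Fintype.card V ^ s * (q + 1) ^ s.choose 2 ≤ (q + 2) ^ s.choose 2) :
    ∃ ω : Sym2 V → Fin (q + 2), (∀ S : Finset V, AcyclicSet (randArc ω) S → #S < s) ∧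
      2 * #{g | IsCopy T (randArc ω) g} < Fintype.card V := by
  set N := Fintype.card V
  set M := Fintype.card (Sym2 V)
  have hΩ : Fintype.card (Sym2 V → Fin (q + 2)) = (q + 2) ^ M := by simp [M]
  have hQ : 0 < q + 2 := Nat.succ_pos (q + 1)
  have hforward := sum_card_filter_mul_le (fun (v : Fin s → V) (ω : Sym2 V → Fin (q + 2)) =>
    Injective v ∧ ∀ i j, i < j → ¬ randArc ω (v j) (v i)) card_forward_randArc_mul_le
  have hcopies := sum_card_filter_mul_le (fun g (ω : Sym2 V → Fin (q + 2)) =>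
    IsCopy T (randArc ω) g) (card_isCopy_randArc_mul_le hT)
  simp only [Fintype.card_fun, Fintype.card_fin] at hforward hcopies
  have hfewForward : 2 * ∑ ω : Sym2 V → Fin (q + 2),
      #{v : Fin s → V | Injective v ∧ ∀ i j, i < j → ¬ randArc ω (v j) (v i)}
      ≤ Fintype.card (Sym2 V → Fin (q + 2)) := by
    rw [hΩ]
    refine Nat.le_of_mul_le_mul_right ?_ (pow_pos hQ (s.choose 2))
    calc 2 * (∑ ω, _) * (q + 2) ^ s.choose 2
        ≤ 2 * (N ^ s * ((q + 1) ^ s.choose 2 * (q + 2) ^ M)) := by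
          rw [mul_assoc]; exact Nat.mul_le_mul_left 2 hforward
      _ = 2 * N ^ s * (q + 1) ^ s.choose 2 * (q + 2) ^ M := by ring
      _ ≤ (q + 2) ^ s.choose 2 * (q + 2) ^ M := Nat.mul_le_mul_right _ hacyc
      _ = (q + 2) ^ M * (q + 2) ^ s.choose 2 := mul_comm _ _
  have hfewCopies : 2 * ∑ ω : Sym2 V → Fin (q + 2), 2 * #{g | IsCopy T (randArc ω) g}
      < N * Fintype.card (Sym2 V → Fin (q + 2)) := by
    rw [hΩ, ← mul_sum]
    refine Nat.lt_of_mul_lt_mul_right (a := (q + 2) ^ t.choose 2) ?_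
    calc 2 * (2 * ∑ ω, _) * (q + 2) ^ t.choose 2 ≤ 4 * (N ^ t * (q + 2) ^ M) := by
          rw [← mul_assoc, mul_assoc]; exact Nat.mul_le_mul_left 4 hcopies
      _ = 4 * N ^ t * (q + 2) ^ M := by ring
      _ < N * (q + 2) ^ t.choose 2 * (q + 2) ^ M := Nat.mul_lt_mul_of_pos_right hcopy (pow_pos hQ M)
      _ = N * (q + 2) ^ M * (q + 2) ^ t.choose 2 := by ring
  obtain ⟨ω, hnone, hfew⟩ := exists_eq_zero_and_lt _ _ hfewForward hfewCopies
  refine ⟨ω, fun S hS => ?_, hfew⟩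
  by_contra! hs
  obtain ⟨v, hv, -, hfwd⟩ := hS.exists_forward_ordering s S hs
  exact filter_eq_empty_iff.mp (card_eq_zero.mp hnone) (mem_univ v) ⟨hv, hfwd⟩

end RandomOrientedGraph

section Estimates

lemma two_mul_choose_two (n : ℕ) : 2 * n.choose 2 = n * (n - 1) := by
  rw [Nat.choose_two_right, Nat.mul_div_cancel' (Nat.even_mul_pred_self n).two_dvd]

/-- `(1 - 1/Q)^(jQ) ≤ e^(-j) ≤ 2^(-j)` for `Q = q + 2`. -/
lemma two_pow_mul_pow_le {q j c : ℕ} (h : j * (q + 2) ≤ c) :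
    2 ^ j * (q + 1) ^ c ≤ (q + 2) ^ c := by
  have hbase : 2 * (q + 1) ^ (q + 2) ≤ (q + 2) ^ (q + 2) := by
    have hq : (0 : ℝ) < q + 2 := by positivity
    have hexp : (1 - 1 / (q + 2 : ℕ) : ℝ) ^ (q + 2) ≤ Real.exp (-1) :=
      Real.one_sub_div_pow_le_exp_neg (by push_cast; linarith)
    have hhalf : Real.exp (-1) ≤ 1 / 2 := by
      rw [Real.exp_neg, inv_le_comm₀ (Real.exp_pos 1) (by norm_num)]
      linarith [Real.add_one_le_exp 1]
    rw [show (1 - 1 / (q + 2 : ℕ) : ℝ) = (q + 1) / (q + 2) by push_cast; field_simp; ring,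
      div_pow, div_le_iff₀ (pow_pos hq _)] at hexp
    have : 2 * ((q : ℝ) + 1) ^ (q + 2) ≤ ((q : ℝ) + 2) ^ (q + 2) := by
      nlinarith [mul_le_mul_of_nonneg_right hhalf (pow_pos hq (q + 2)).le]
    exact_mod_cast this
  obtain ⟨e, rfl⟩ := Nat.exists_eq_add_of_le h
  calc 2 ^ j * (q + 1) ^ (j * (q + 2) + e) = (2 * (q + 1) ^ (q + 2)) ^ j * (q + 1) ^ e := by
        rw [pow_add, mul_comm j, pow_mul, mul_pow, mul_assoc]
    _ ≤ ((q + 2) ^ (q + 2)) ^ j * (q + 2) ^ e := by gcongr; omega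
    _ = (q + 2) ^ (j * (q + 2) + e) := by rw [← pow_mul, ← pow_add, mul_comm (q + 2) j]

lemma four_mul_pow_lt {k q t : ℕ} (hq : q + 2 = 2 * 4 ^ k) (ht : 3 ≤ t) :
    4 * (2 ^ (k * t)) ^ t < 2 ^ (k * t) * (q + 2) ^ t.choose 2 := by
  have hC : 3 ≤ t.choose 2 := Nat.choose_le_choose 2 ht
  have h2C := two_mul_choose_two t
  have hexp : 2 + k * t * t < k * t + (2 * k + 1) * t.choose 2 := by
    obtain ⟨u, rfl⟩ := Nat.exists_eq_add_of_le' (by omega : 1 ≤ t)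
    simp only [Nat.add_sub_cancel] at h2C
    nlinarith
  have hq2 : q + 2 = 2 ^ (2 * k + 1) := by rw [hq, pow_succ', pow_mul]; norm_num
  calc 4 * (2 ^ (k * t)) ^ t = 2 ^ (2 + k * t * t) := by ring
    _ < 2 ^ (k * t + (2 * k + 1) * t.choose 2) := Nat.pow_lt_pow_right (by norm_num) hexp
    _ = 2 ^ (k * t) * (q + 2) ^ t.choose 2 := by rw [pow_add, pow_mul 2 (2 * k + 1), hq2]

lemma two_mul_pow_mul_pow_le {k q : ℕ} (t : ℕ) (hq : q + 2 = 2 * 4 ^ k) :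
    2 * (2 ^ (k * t)) ^ (4 ^ k * (4 * (t * k + 1)))
        * (q + 1) ^ (4 ^ k * (4 * (t * k + 1))).choose 2
      ≤ (q + 2) ^ (4 ^ k * (4 * (t * k + 1))).choose 2 := by
  set s := 4 ^ k * (4 * (t * k + 1))
  rw [← pow_mul, ← pow_succ']
  refine two_pow_mul_pow_le ?_
  have hs : t * k + 2 ≤ s := by
    have := Nat.mul_le_mul_right (4 * (t * k + 1)) (Nat.one_le_pow k 4 (by norm_num))
    omega
  have hstep : k * t * s + 1 ≤ (t * k + 1) * (s - 1) := by
    obtain ⟨w, hw⟩ := Nat.exists_eq_add_of_le' (by omega : 1 ≤ s)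
    rw [hw, Nat.add_sub_cancel]
    nlinarith
  have : 2 * ((k * t * s + 1) * (q + 2)) ≤ 2 * s.choose 2 := by
    rw [two_mul_choose_two, hq]
    calc 2 * ((k * t * s + 1) * (2 * 4 ^ k)) = 4 ^ k * 4 * (k * t * s + 1) := by ring
      _ ≤ 4 ^ k * 4 * ((t * k + 1) * (s - 1)) := by gcongr
      _ = s * (s - 1) := by ring
  omega

lemma eventually_mul_add_le_pow {a : ℝ} (ha : 1 < a) (b c : ℝ) :
    ∀ᶠ k : ℕ in Filter.atTop, b * k + c ≤ a ^ k := by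
  have hlin : (fun k : ℕ => b * k + c) =o[Filter.atTop] fun k => a ^ k :=
    ((isLittleO_coe_const_pow_of_one_lt ha).const_mul_left b).add
      (Asymptotics.isLittleO_const_left.mpr (Or.inr
        (tendsto_norm_atTop_atTop.comp (tendsto_pow_atTop_atTop_of_one_lt ha))))
  filter_upwards [hlin.bound one_pos] with k hk
  rw [one_mul, Real.norm_of_nonneg (pow_pos (by linarith) k).le] at hk
  exact (le_abs_self _).trans hk

lemma two_pow_rpow_eq (k t : ℕ) (ε : ℝ) :
    ((2 : ℝ) ^ (k * t)) ^ ε = 4 ^ k * (2 ^ (t * ε - 2)) ^ k := by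
  have h4 : (4 : ℝ) * 2 ^ (t * ε - 2) = 2 ^ (t * ε) := by
    rw [Real.rpow_sub two_pos, Real.rpow_two]; field_simp; norm_num
  rw [← mul_pow, h4, ← Real.rpow_natCast, ← Real.rpow_mul two_pos.le, ← Real.rpow_natCast,
    ← Real.rpow_mul two_pos.le]
  push_cast; ring_nf

end Estimates

theorem exists_oriented_not_isCopy_maxAcyclic_lt {t : ℕ} (ht : 3 ≤ t) (T : Fin t → Fin t → Prop)
    (hT : ∀ i j, i ≠ j → T i j ∨ T j i) (k : ℕ) :
    ∃ (n : ℕ) (A : Fin n → Fin n → Prop), (∀ u v, A u v → ¬ A v u) ∧ (¬ ∃ g, IsCopy T A g) ∧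
      2 ^ (k * t) < 2 * n ∧ maxAcyclic A < 4 ^ k * (4 * (t * k + 1)) := by
  classical
  obtain ⟨q, hq⟩ : ∃ q, q + 2 = 2 * 4 ^ k :=
    ⟨2 * 4 ^ k - 2, by have := Nat.one_le_pow k 4 (by norm_num); omega⟩
  have hcopy := four_mul_pow_lt hq ht
  have hacyc := two_mul_pow_mul_pow_le t hq
  rw [← Fintype.card_fin (2 ^ (k * t))] at hcopy hacyc
  obtain ⟨ω, hsmall, hfew⟩ := exists_randArc_acyclic_lt_and_copies_lt T hT _ hcopy hacyc
  obtain ⟨n, φ, hn, hfree⟩ := exists_embedding_not_isCopy T ⟨0, by omega⟩ (randArc ω)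
  refine ⟨n, fun a b => randArc ω (φ a) (φ b), fun u v => randArc_asymm ω _ _, hfree, ?_,
    maxAcyclic_comp_lt hsmall φ⟩
  rw [Fintype.card_fin] at hn hfew
  omega

theorem stmt10_general (t : ℕ) (ht : 3 ≤ t) (T : Fin t → Fin t → Prop)
    (hT2 : ∀ u v : Fin t, u ≠ v → T u v ∨ T v u)
    (ε : ℝ)
    (h : ∀ (n : ℕ) (A : Fin n → Fin n → Prop),
      (∀ u v, A u v → ¬ A v u) →
      (¬ ∃ g : Fin t → Fin n, Function.Injective g ∧ ∀ i j, T i j → A (g i) (g j)) →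
      (n : ℝ) ^ ε ≤ (maxAcyclic A : ℝ)) :
    ε ≤ 2 / t := by
  by_contra! hε
  have ht0 : (0 : ℝ) < t := by positivity
  have hε0 : 0 < ε := (div_pos two_pos ht0).trans hε
  have hδ : 1 < (2 : ℝ) ^ (t * ε - 2) :=
    Real.one_lt_rpow one_lt_two (by linarith [(div_lt_iff₀ ht0).mp hε])
  obtain ⟨k, hk⟩ := (eventually_mul_add_le_pow hδ (2 ^ ε * 4 * t) (2 ^ ε * 4)).exists
  obtain ⟨n, A, hA, hfree, hn, hmax⟩ := exists_oriented_not_isCopy_maxAcyclic_lt ht T hT2 k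
  have hlt : ((2 : ℝ) ^ (k * t)) ^ ε < ((2 : ℝ) ^ (k * t)) ^ ε := calc
    _ ≤ (2 * n : ℝ) ^ ε := Real.rpow_le_rpow (by positivity) (by exact_mod_cast hn.le) hε0.le
    _ = 2 ^ ε * (n : ℝ) ^ ε := Real.mul_rpow two_pos.le n.cast_nonneg
    _ ≤ 2 ^ ε * maxAcyclic A := by gcongr; exact h n A hA hfree
    _ < 2 ^ ε * (4 ^ k * (4 * (t * k + 1))) := by gcongr; exact_mod_cast hmax
    _ ≤ 4 ^ k * (2 ^ (t * ε - 2)) ^ k := by nlinarith [pow_pos (by norm_num : (0 : ℝ) < 4) k]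
    _ = _ := (two_pow_rpow_eq k t ε).symm
  exact lt_irrefl _ hlt

/-- If `T` is a tournament on `t ≥ 3` vertices and `ε > 0` is such that
every `n`-vertex `T`-free oriented graph has an acyclic set of size at least `n^ε`,
then `ε ≤ 2/t`. -/
theorem stmt10 (t : ℕ) (ht : 3 ≤ t) (T : Fin t → Fin t → Prop)
    (hT1 : ∀ u v, T u v → ¬ T v u) (hT2 : ∀ u v : Fin t, u ≠ v → T u v ∨ T v u)
    (ε : ℝ) (hε : 0 < ε)
    (h : ∀ (n : ℕ) (A : Fin n → Fin n → Prop),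
      (∀ u v, A u v → ¬ A v u) →
      (¬ ∃ g : Fin t → Fin n, Function.Injective g ∧ ∀ i j, T i j → A (g i) (g j)) →
      (n : ℝ) ^ ε ≤ (maxAcyclic A : ℝ)) :
    ε ≤ 2 / t :=
  stmt10_general t ht T hT2 ε h
end
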